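/- arXiv:2508.21338 — 3 statements merged into one kernel-verified Lean document; each statement's English description precedes it below -/
import Mathlib

section
/- For all natural numbers r ≤ n, the r-th x-derivative satisfies ∂_x^r H_n(x,y|λ) = (n!/(n-r)!) · (log(1+λ)/λ)^r · H_{n-r}(x,y|λ). -/
open Real Finset MeasureTheory

noncomputable def dH (l x y : ℝ) (n : ℕ) : ℝ :=
  ∑ k ∈ Finset.range (n / 2 + 1),
    (Nat.factorial n : ℝ) / ((Nat.factorial (n - 2 * k) : ℝ) * (Nat.factorial k : ℝ)) *
      (Real.log (1 + l) / l) ^ (n - k) * x ^ (n - 2 * k) * y ^ k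

/-
Differentiating the `k`-th monomial of `H_{n+1}` in `x` brings down the factor
`n + 1 - 2k`, which turns its coefficient into `(n + 1)` times the coefficient of the `k`-th
monomial of `H_n`; the extra factor `log(1+λ)/λ` comes from the exponent `n + 1 - k` versus
`n - k`. Hence `∂ₓ H_n = n · (log(1+λ)/λ) · H_{n-1}`, and iterating gives the descending
factorial `n (n-1) ⋯ (n-r+1) = n!/(n-r)!`.
-/

lemma factorial_div_mul_succ_sub {n k : ℕ} (hk : 2 * k ≤ n) :
    ((n + 1).factorial : ℝ) / ((n + 1 - 2 * k).factorial * k.factorial) * (n + 1 - 2 * k : ℕ) =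
      (n + 1) * (n.factorial / ((n - 2 * k).factorial * k.factorial)) := by
  rw [show n + 1 - 2 * k = n - 2 * k + 1 by omega, Nat.factorial_succ, Nat.factorial_succ]
  have : ((n - 2 * k : ℕ) : ℝ) + 1 ≠ 0 := by positivity
  push_cast
  field_simp

lemma hasDerivAt_dH_succ (l x y : ℝ) (n : ℕ) :
    HasDerivAt (fun x' => dH l x' y (n + 1))
      ((n + 1) * (Real.log (1 + l) / l) * dH l x y n) x := by
  have hterms : HasDerivAt (fun x' => dH l x' y (n + 1))
      (∑ k ∈ range ((n + 1) / 2 + 1),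
        ((n + 1).factorial : ℝ) / ((n + 1 - 2 * k).factorial * k.factorial) *
          (Real.log (1 + l) / l) ^ (n + 1 - k) *
          ((n + 1 - 2 * k : ℕ) * x ^ (n + 1 - 2 * k - 1)) * y ^ k) x :=
    HasDerivAt.fun_sum fun k _ => ((hasDerivAt_pow (n + 1 - 2 * k) x).const_mul _).mul_const _
  convert hterms using 1
  -- the only index `k` of `H_{n+1}` missing from `H_n` has `2k = n + 1`, a constant monomial
  have hsub : range (n / 2 + 1) ⊆ range ((n + 1) / 2 + 1) := range_subset_range.mpr (by omega)
  rw [← sum_subset hsub fun k hk hk' => by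
    rw [mem_range] at hk hk'
    simp [show n + 1 - 2 * k = 0 by omega]]
  rw [dH, mul_sum]
  refine sum_congr rfl fun k hk => ?_
  have hk : 2 * k ≤ n := by rw [mem_range] at hk; omega
  rw [show n + 1 - k = n - k + 1 by omega, show n + 1 - 2 * k - 1 = n - 2 * k by omega]
  linear_combination (-((Real.log (1 + l) / l) ^ (n - k + 1) * x ^ (n - 2 * k) * y ^ k)) *
    factorial_div_mul_succ_sub hk

lemma hasDerivAt_dH (l x y : ℝ) (n : ℕ) :
    HasDerivAt (fun x' => dH l x' y n) (n * (Real.log (1 + l) / l) * dH l x y (n - 1)) x := by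
  cases n with
  | zero => simpa [dH] using hasDerivAt_const x (1 : ℝ)
  | succ n => simpa using hasDerivAt_dH_succ l x y n

lemma iteratedDeriv_dH (l y : ℝ) (n r : ℕ) (x : ℝ) :
    iteratedDeriv r (fun x' => dH l x' y n) x =
      n.descFactorial r * (Real.log (1 + l) / l) ^ r * dH l x y (n - r) := by
  induction r generalizing x with
  | zero => simp
  | succ r ih =>
    rw [iteratedDeriv_succ, funext ih,
      ((hasDerivAt_dH l x y (n - r)).const_mul (n.descFactorial r * (Real.log (1 + l) / l) ^ r)).deriv,
      Nat.descFactorial_succ, Nat.sub_sub]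
    push_cast
    ring

theorem stmt3_general (l : ℝ) (n r : ℕ) (hr : r ≤ n) (x y : ℝ) :
    iteratedDeriv r (fun x' => dH l x' y n) x =
      ((Nat.factorial n : ℝ) / (Nat.factorial (n - r) : ℝ)) *
        (Real.log (1 + l) / l) ^ r * dH l x y (n - r) := by
  rw [iteratedDeriv_dH, ← Nat.factorial_mul_descFactorial hr, Nat.cast_mul,
    mul_div_cancel_left₀ _ (Nat.cast_ne_zero.mpr (Nat.factorial_ne_zero _))]

theorem stmt3 (l : ℝ) (hl : 0 < l) (n r : ℕ) (hr : r ≤ n) (x y : ℝ) :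
    iteratedDeriv r (fun x' => dH l x' y n) x =
      ((Nat.factorial n : ℝ) / (Nat.factorial (n - r) : ℝ)) *
        (Real.log (1 + l) / l) ^ r * dH l x y (n - r) :=
  stmt3_general l n r hr x y
end

section
/- For all n ≥ 0, iterating the multiplicative operator gives ((log(1+λ)/λ)·x + 2y·∂_x)ⁿ applied to the constant function 1 equals H_n(x,y|λ). -/
/-!
With `c = log (1 + λ) / λ` one has `H_n(x, y | λ) = H_n(c x, c y)`, where `H_n(x, y)` are the
two-variable Hermite polynomials of Kampé de Fériet. These satisfy the monomiality relation
`H_{n+1} = (x + 2y ∂ₓ) H_n`, which on coefficients is the Pascal-type identity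
`a(n+1, k+1) = a(n, k+1) + 2 (n - 2k) a(n, k)` for `a(n, k) = n! / ((n - 2k)! k!)`. Since
`∂ₓ (f (c x)) = c f'(c x)`, the substitution `x ↦ c x` conjugates `x + 2(cy) ∂ₓ` into
`c x + 2y ∂ₓ`, so iterating the latter on `1` produces `H_n(c x, c y)`.
-/

open Real Finset MeasureTheory

open Nat

/-- `n! / ((n - 2k)! k!)`, written without division so that it is `0` when `n < 2k`. -/
def hermiteKdFCoeff (n k : ℕ) : ℕ := n.choose (2 * k) * k.centralBinom * k !

theorem hermiteKdFCoeff_zero_right (n : ℕ) : hermiteKdFCoeff n 0 = 1 := by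
  simp [hermiteKdFCoeff]

theorem hermiteKdFCoeff_of_lt {n k : ℕ} (h : n < 2 * k) : hermiteKdFCoeff n k = 0 := by
  simp [hermiteKdFCoeff, Nat.choose_eq_zero_of_lt h]

theorem hermiteKdFCoeff_mul_factorial_mul_factorial {n k : ℕ} (h : 2 * k ≤ n) :
    hermiteKdFCoeff n k * (n - 2 * k)! * k ! = n ! := by
  have hc : k.centralBinom * k ! * k ! = (2 * k)! := by
    have := Nat.choose_mul_factorial_mul_factorial (show k ≤ 2 * k by omega)
    rwa [show 2 * k - k = k by omega, ← Nat.centralBinom_eq_two_mul_choose] at this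
  rw [hermiteKdFCoeff, ← Nat.choose_mul_factorial_mul_factorial h, ← hc]
  ring

theorem hermiteKdFCoeff_succ_succ (n k : ℕ) :
    hermiteKdFCoeff (n + 1) (k + 1) =
      hermiteKdFCoeff n (k + 1) + 2 * (n - 2 * k) * hermiteKdFCoeff n k := by
  have hodd : n.choose (2 * k + 1) * (k + 1).centralBinom * (k + 1)! =
      2 * (n - 2 * k) * hermiteKdFCoeff n k := by
    rw [hermiteKdFCoeff, Nat.factorial_succ]
    linear_combination (n.choose (2 * k + 1) * k !) * Nat.succ_mul_centralBinom_succ k +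
      (2 * k.centralBinom * k !) * Nat.choose_succ_right_eq n (2 * k)
  rw [hermiteKdFCoeff, show 2 * (k + 1) = 2 * k + 1 + 1 by ring, Nat.choose_succ_succ', add_mul,
    add_mul, hodd]
  exact add_comm _ _

section Semiring

variable {R : Type*} [CommSemiring R]

/-- Kampé de Fériet's two-variable Hermite polynomial `H_n(x, y)`; summing up to `n` rather than
`n / 2` only adds zero terms. -/
def hermiteKdF (y : R) (n : ℕ) (x : R) : R :=
  ∑ k ∈ range (n + 1), (hermiteKdFCoeff n k : R) * x ^ (n - 2 * k) * y ^ k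

theorem hermiteKdF_term_succ_succ (y x : R) (n k : ℕ) :
    (hermiteKdFCoeff (n + 1) (k + 1) : R) * x ^ (n + 1 - 2 * (k + 1)) * y ^ (k + 1) =
      x * ((hermiteKdFCoeff n (k + 1) : R) * x ^ (n - 2 * (k + 1)) * y ^ (k + 1)) +
        2 * y * ((hermiteKdFCoeff n k : R) * (((n - 2 * k : ℕ) : R) * x ^ (n - 2 * k - 1)) *
          y ^ k) := by
  rw [hermiteKdFCoeff_succ_succ]
  push_cast
  rcases le_or_gt (2 * (k + 1)) n with h | h
  · rw [show n + 1 - 2 * (k + 1) = n - 2 * (k + 1) + 1 by omega,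
      show n - 2 * k - 1 = n - 2 * (k + 1) + 1 by omega]
    ring
  · rw [hermiteKdFCoeff_of_lt h, show n + 1 - 2 * (k + 1) = n - 2 * k - 1 by omega]
    push_cast
    ring

end Semiring

section Deriv

variable {𝕜 : Type*} [NontriviallyNormedField 𝕜]

theorem hasDerivAt_hermiteKdF (y : 𝕜) (n : ℕ) (x : 𝕜) :
    HasDerivAt (hermiteKdF y n)
      (∑ k ∈ range (n + 1),
        (hermiteKdFCoeff n k : 𝕜) * (((n - 2 * k : ℕ) : 𝕜) * x ^ (n - 2 * k - 1)) * y ^ k) x := by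
  unfold hermiteKdF
  exact HasDerivAt.fun_sum fun k _ =>
    ((hasDerivAt_pow (n - 2 * k) x).const_mul _).mul_const _

theorem hermiteKdF_succ (y : 𝕜) (n : ℕ) (x : 𝕜) :
    hermiteKdF y (n + 1) x = x * hermiteKdF y n x + 2 * y * deriv (hermiteKdF y n) x := by
  have hshift : hermiteKdF y n x = ∑ k ∈ range (n + 1),
      (hermiteKdFCoeff n (k + 1) : 𝕜) * x ^ (n - 2 * (k + 1)) * y ^ (k + 1) + x ^ n := by
    calc hermiteKdF y n x
        = ∑ k ∈ range (n + 2), (hermiteKdFCoeff n k : 𝕜) * x ^ (n - 2 * k) * y ^ k := by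
          rw [sum_range_succ, hermiteKdFCoeff_of_lt (by omega : n < 2 * (n + 1))]
          simp [hermiteKdF]
      _ = _ := by simp [sum_range_succ' _ (n + 1), hermiteKdFCoeff_zero_right]
  rw [(hasDerivAt_hermiteKdF y n x).deriv, hermiteKdF, sum_range_succ',
    sum_congr rfl fun k _ => hermiteKdF_term_succ_succ y x n k, sum_add_distrib, hshift,
    mul_add, mul_sum, mul_sum, hermiteKdFCoeff_zero_right]
  simp only [Nat.mul_zero, Nat.sub_zero, pow_zero, Nat.cast_one, pow_succ]
  ring

theorem iterate_mul_add_deriv_one_eq (c y : 𝕜) (n : ℕ) :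
    (fun f : 𝕜 → 𝕜 => fun x => c * x * f x + 2 * y * deriv f x)^[n] (fun _ => 1) =
      fun x => hermiteKdF (c * y) n (c * x) := by
  induction n with
  | zero => funext x; simp [hermiteKdF, hermiteKdFCoeff_zero_right]
  | succ n ih =>
    rw [Function.iterate_succ_apply', ih]
    funext x
    rw [deriv_comp_mul_left, hermiteKdF_succ, smul_eq_mul]
    ring

end Deriv

section Field

variable {K : Type*} [Field K] [CharZero K]

theorem hermiteKdFCoeff_cast_eq_factorial_div {n k : ℕ} (h : 2 * k ≤ n) :
    (hermiteKdFCoeff n k : K) = (n ! : K) / ((n - 2 * k)! * k !) := by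
  rw [eq_div_iff (by simp [Nat.factorial_ne_zero]), ← mul_assoc]
  exact_mod_cast hermiteKdFCoeff_mul_factorial_mul_factorial h

theorem hermiteKdF_mul_mul_eq_sum (c y : K) (n : ℕ) (x : K) :
    hermiteKdF (c * y) n (c * x) = ∑ k ∈ range (n / 2 + 1),
      (n ! : K) / ((n - 2 * k)! * k !) * c ^ (n - k) * x ^ (n - 2 * k) * y ^ k := by
  rw [hermiteKdF, ← sum_subset (range_subset_range.mpr (by omega : n / 2 + 1 ≤ n + 1))
    fun k _ hk => by rw [hermiteKdFCoeff_of_lt (by simp at hk; omega)]; simp]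
  refine sum_congr rfl fun k hk => ?_
  have hkn : 2 * k ≤ n := by simp at hk; omega
  rw [hermiteKdFCoeff_cast_eq_factorial_div hkn, mul_pow, mul_pow,
    show n - k = n - 2 * k + k by omega, pow_add]
  ring

end Field

theorem stmt16_general (l y : ℝ) (n : ℕ) (x : ℝ) :
    ((fun f : ℝ → ℝ => fun x' =>
        (Real.log (1 + l) / l) * x' * f x' + 2 * y * deriv f x')^[n]
      (fun _ => (1 : ℝ))) x = dH l x y n := by
  rw [iterate_mul_add_deriv_one_eq]
  exact hermiteKdF_mul_mul_eq_sum _ _ _ _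

theorem stmt16 (l y : ℝ) (hl : 0 < l) (n : ℕ) (x : ℝ) :
    ((fun f : ℝ → ℝ => fun x' =>
        (Real.log (1 + l) / l) * x' * f x' + 2 * y * deriv f x')^[n]
      (fun _ => (1 : ℝ))) x = dH l x y n :=
  stmt16_general l y n x
end

section
/- For λ > 0, fixed y < 0, and m ≠ n, the bivariate degenerate Hermite polynomials are partially orthogonal in x: ∫_{-∞}^{∞} (1+λ)^{x²/(4yλ)} H_n(x,y|λ) H_m(x,y|λ) dx = 0, where (1+λ)^{x²/(4yλ)} = exp(x²·log(1+λ)/(4yλ)) is integrable since y < 0. -/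
open Real Finset MeasureTheory

/-!
Put `c = log (1 + λ) / λ > 0`, `t = √(-2cy)` and `s = c / t`. Comparing coefficients with the
explicit formula for the probabilists' Hermite polynomials gives `H_n(x, y | λ) = tⁿ Heₙ(s x)`,
and the weight is `exp (-(s x)² / 2)`. After the substitution `u = s x` the claim is the
orthogonality of `Heₙ` and `Heₘ` for the Gaussian weight: by Rodrigues' formula
`Heₙ(u) e^{-u²/2} = (-1)ⁿ (d/du)ⁿ e^{-u²/2}`, and `n` integrations by parts move all derivatives
onto `Heₘ`, a polynomial of degree `m < n`.
-/

open Polynomial Nat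

theorem Nat.factorial_two_mul (k : ℕ) : (2 * k)! = 2 ^ k * k ! * (2 * k - 1)‼ := by
  cases k with
  | zero => rfl
  | succ k =>
    rw [show 2 * (k + 1) = 2 * k + 1 + 1 by ring, factorial_eq_mul_doubleFactorial,
      show 2 * k + 1 + 1 = 2 * (k + 1) by ring, doubleFactorial_two_mul]
    rfl

namespace Polynomial

theorem aeval_eq_sum_range_of_coeff_odd_add {R A : Type*} [CommSemiring R] [CommSemiring A]
    [Algebra R A] {p : R[X]} {n : ℕ} (hdeg : p.natDegree ≤ n)
    (hodd : ∀ i, Odd (n + i) → p.coeff i = 0) (x : A) :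
    aeval x p = ∑ k ∈ range (n / 2 + 1), p.coeff (n - 2 * k) • x ^ (n - 2 * k) := by
  have hsub : (range (n / 2 + 1)).image (fun k => n - 2 * k) ⊆ range (n + 1) := by
    intro i
    simp only [mem_image, mem_range]
    omega
  have hinj : Set.InjOn (fun k => n - 2 * k) (range (n / 2 + 1)) := by
    intro a ha b hb hab
    simp only [coe_range, Set.mem_Iio] at ha hb hab
    omega
  rw [aeval_eq_sum_range' (Nat.lt_succ_of_le hdeg),
    ← sum_image (f := fun i => p.coeff i • x ^ i) hinj]
  refine (sum_subset hsub fun i hi hni => ?_).symm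
  rw [mem_range] at hi
  have hi_odd : Odd (n + i) := by
    by_contra heven
    rw [Nat.not_odd_iff_even, Nat.even_add, ← Nat.even_sub (by omega)] at heven
    obtain ⟨j, hj⟩ := heven
    refine hni (mem_image.mpr ⟨j, mem_range.mpr ?_, ?_⟩) <;> omega
  rw [hodd i hi_odd, zero_smul]

theorem coeff_hermite_sub_two_mul {n k : ℕ} (hk : 2 * k ≤ n) :
    ((hermite n).coeff (n - 2 * k) : ℝ) = (-1 / 2) ^ k * (n ! / ((n - 2 * k)! * k !)) := by
  have hchoose := Nat.choose_mul_factorial_mul_factorial hk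
  rw [factorial_two_mul] at hchoose
  rw [coeff_hermite_of_even_add ⟨n - k, by omega⟩, show (n - (n - 2 * k)) = 2 * k by omega,
    Nat.mul_div_cancel_left _ two_pos, choose_symm hk, ← hchoose]
  push_cast
  rw [div_pow]
  field_simp

theorem aeval_hermite_eq_sum (n : ℕ) (x : ℝ) :
    aeval x (hermite n) =
      ∑ k ∈ range (n / 2 + 1), (-1 / 2) ^ k * (n ! / ((n - 2 * k)! * k !)) * x ^ (n - 2 * k) := by
  rw [aeval_eq_sum_range_of_coeff_odd_add natDegree_hermite.le fun i => coeff_hermite_of_odd_add]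
  refine sum_congr rfl fun k hk => ?_
  rw [zsmul_eq_mul, coeff_hermite_sub_two_mul (by simp at hk; omega)]

end Polynomial

theorem integrable_eval_mul_gaussian (p : ℝ[X]) :
    Integrable fun x : ℝ => p.eval x * Real.exp (-(x ^ 2 / 2)) := by
  simp_rw [eval_eq_sum_range, sum_mul, mul_assoc]
  refine integrable_finsetSum _ fun i _ => Integrable.const_mul ?_ _
  have := integrable_rpow_mul_exp_neg_mul_sq (b := 1 / 2) (by norm_num) (s := i)
    (by linarith [(i.cast_nonneg : (0 : ℝ) ≤ i)])
  convert this using 2 with x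
  rw [rpow_natCast]
  ring_nf

theorem integrable_eval_mul_iterate_deriv_gaussian (p : ℝ[X]) (j : ℕ) :
    Integrable fun x : ℝ => p.eval x * deriv^[j] (fun x => Real.exp (-(x ^ 2 / 2))) x := by
  refine (integrable_eval_mul_gaussian (p * C ((-1) ^ j) * (hermite j).map (algebraMap ℤ ℝ))).congr
    (.of_forall fun x => ?_)
  simp only [deriv_gaussian_eq_hermite_mul_gaussian, eval_mul, eval_C, eval_map_algebraMap]
  ring

theorem integral_eval_mul_iterate_deriv_gaussian (p : ℝ[X]) (j : ℕ) :
    ∫ x : ℝ, p.eval x * deriv^[j] (fun x => Real.exp (-(x ^ 2 / 2))) x =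
      (-1) ^ j * ∫ x : ℝ, (derivative^[j] p).eval x * Real.exp (-(x ^ 2 / 2)) := by
  induction j generalizing p with
  | zero => simp
  | succ j ih =>
    have hg : ContDiff ℝ (⊤ : ℕ∞) (deriv^[j] fun x : ℝ => Real.exp (-(x ^ 2 / 2))) :=
      ContDiff.iterate_deriv j (f := fun x : ℝ => Real.exp (-(x ^ 2 / 2))) (by fun_prop)
    rw [integral_mul_deriv_eq_deriv_mul_of_integrable (fun x _ => p.hasDerivAt x)
        (fun x _ => by
          rw [Function.iterate_succ_apply']
          exact (hg.differentiable (by simp) x).hasDerivAt)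
        (integrable_eval_mul_iterate_deriv_gaussian p (j + 1))
        (integrable_eval_mul_iterate_deriv_gaussian _ j)
        (integrable_eval_mul_iterate_deriv_gaussian p j),
      ih, Function.iterate_succ_apply, pow_succ]
    ring

theorem integral_eval_mul_hermite_mul_gaussian_eq_zero {p : ℝ[X]} {n : ℕ} (hp : p.natDegree < n) :
    ∫ x : ℝ, p.eval x * aeval x (hermite n) * Real.exp (-(x ^ 2 / 2)) = 0 := by
  have hrodrigues : ∀ x : ℝ, p.eval x * aeval x (hermite n) * Real.exp (-(x ^ 2 / 2)) =
      (-1) ^ n * (p.eval x * deriv^[n] (fun x => Real.exp (-(x ^ 2 / 2))) x) := by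
    intro x
    have hsign : ((-1 : ℝ) ^ n) * (-1) ^ n = 1 := by rw [← mul_pow]; norm_num
    rw [deriv_gaussian_eq_hermite_mul_gaussian]
    linear_combination (-(p.eval x * aeval x (hermite n) * Real.exp (-(x ^ 2 / 2)))) * hsign
  simp_rw [hrodrigues, integral_const_mul, integral_eval_mul_iterate_deriv_gaussian,
    iterate_derivative_eq_zero hp]
  simp

theorem integral_gaussian_mul_hermite_mul_hermite_eq_zero {m n : ℕ} (hmn : m ≠ n) :
    ∫ x : ℝ, Real.exp (-(x ^ 2 / 2)) * aeval x (hermite n) * aeval x (hermite m) = 0 := by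
  wlog hlt : m < n generalizing m n
  · simpa only [mul_right_comm _ (aeval _ (hermite n))] using
      this hmn.symm (hmn.lt_or_gt.resolve_left hlt)
  simp_rw [mul_comm (Real.exp _), ← eval_map_algebraMap (hermite m)]
  rw [← integral_eval_mul_hermite_mul_gaussian_eq_zero (p := (hermite m).map (algebraMap ℤ ℝ))
    (natDegree_map_le.trans_lt (by rwa [natDegree_hermite]))]
  congr 1 with x
  ring

section DegenerateHermite

variable {l y t s : ℝ}

theorem dH_eq_pow_mul_aeval_hermite (hts : t * s = log (1 + l) / l)
    (ht : t ^ 2 = -(2 * (log (1 + l) / l) * y)) (x : ℝ) (n : ℕ) :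
    dH l x y n = t ^ n * aeval (s * x) (hermite n) := by
  rw [aeval_hermite_eq_sum, mul_sum, dH]
  refine sum_congr rfl fun k hk => ?_
  have hk : 2 * k ≤ n := by rw [mem_range] at hk; omega
  set c := log (1 + l) / l
  have htn : t ^ n = t ^ (n - 2 * k) * (t ^ 2) ^ k := by
    rw [← pow_mul, ← pow_add]; congr 1; omega
  have hcn : c ^ (n - k) = c ^ (n - 2 * k) * c ^ k := by
    rw [← pow_add]; congr 1; omega
  have hsign : (t ^ 2) ^ k * (-1 / 2) ^ k = c ^ k * y ^ k := by
    rw [← mul_pow, ← mul_pow, ht]; ring_nf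
  have hpow : (t * s) ^ (n - 2 * k) = c ^ (n - 2 * k) := by rw [hts]
  rw [htn, hcn, ← hpow]
  linear_combination
    (-(n ! / ((n - 2 * k)! * k ! : ℝ) * (t * s) ^ (n - 2 * k) * x ^ (n - 2 * k))) * hsign

theorem exp_mul_log_div_eq_gaussian (hl : l ≠ 0) (hy : y ≠ 0)
    (hs : -(2 * y) * s ^ 2 = log (1 + l) / l) (x : ℝ) :
    exp (x ^ 2 * log (1 + l) / (4 * y * l)) = exp (-((s * x) ^ 2 / 2)) := by
  congr 1
  rw [eq_div_iff hl] at hs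
  field_simp
  linear_combination (-2 * x ^ 2) * hs

end DegenerateHermite

theorem stmt18 (l y : ℝ) (hl : 0 < l) (hy : y < 0) (m n : ℕ) (hmn : m ≠ n) :
    ∫ x : ℝ, Real.exp (x ^ 2 * Real.log (1 + l) / (4 * y * l)) *
        dH l x y n * dH l x y m = 0 := by
  set c := log (1 + l) / l
  have hc : 0 < c := div_pos (log_pos (by linarith)) hl
  have hcy : 0 < -(2 * c * y) := by nlinarith
  set t := √(-(2 * c * y))
  have ht : t ^ 2 = -(2 * c * y) := sq_sqrt hcy.le
  have ht0 : t ≠ 0 := (sqrt_pos.2 hcy).ne'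
  have hts : t * (c / t) = c := mul_div_cancel₀ _ ht0
  have hs : -(2 * y) * (c / t) ^ 2 = c := by
    rw [div_pow, ht]; field_simp [hy.ne]
  set F : ℝ → ℝ := fun u => exp (-(u ^ 2 / 2)) * aeval u (hermite n) * aeval u (hermite m)
  calc ∫ x : ℝ, exp (x ^ 2 * log (1 + l) / (4 * y * l)) * dH l x y n * dH l x y m
      = ∫ x : ℝ, t ^ n * t ^ m * F (c / t * x) := by
        congr 1 with x
        rw [exp_mul_log_div_eq_gaussian hl.ne' hy.ne hs, dH_eq_pow_mul_aeval_hermite hts ht,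
          dH_eq_pow_mul_aeval_hermite hts ht]
        ring
    _ = 0 := by
        rw [integral_const_mul, Measure.integral_comp_mul_left F,
          integral_gaussian_mul_hermite_mul_hermite_eq_zero hmn, smul_zero, mul_zero]
end
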